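/- arXiv:2307.01867 — 3 statements merged into one kernel-verified Lean document; each statement's English description precedes it below -/
import Mathlib

section
/- For real a > 0, ∫_{0}^{∞} x² / sinh(a x) dx = (7 / (2a³)) * ζ(3), where ζ is the Riemann zeta function. -/
/-!
For `x > 0`, `1 / sinh x = 2 ∑ₖ exp (-(2k+1) x)` is a geometric series. Integrating it termwise
against `xⁿ` with the Gamma integral `∫₀^∞ xⁿ exp (-c x) dx = n! / c^(n+1)` gives
`∫₀^∞ xⁿ / sinh x dx = 2 n! ∑ₖ 1 / (2k+1)^(n+1)`, and the odd terms of `ζ(n+1)` sum to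
`(1 - 2^-(n+1)) ζ(n+1)`. For `n = 2` this is `7/2 ζ(3)`; the substitution `y = a x` gives the
factor `a⁻³`.
-/

open MeasureTheory Set Real
open scoped Nat

lemma hasSum_one_div_two_mul_add_one_pow {p : ℕ} (hp : 1 < p) :
    HasSum (fun k : ℕ => 1 / (2 * (k : ℝ) + 1) ^ p)
      ((1 - 1 / 2 ^ p) * ∑' k : ℕ, 1 / ((k : ℝ) + 1) ^ p) := by
  set f : ℕ → ℝ := fun k => 1 / ((k : ℝ) + 1) ^ p
  have hf : Summable f := by
    simpa [f] using (summable_nat_add_iff 1).mpr (Real.summable_one_div_nat_pow.mpr hp)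
  have hodd_eq : (fun k => f (2 * k + 1)) = fun k => 1 / 2 ^ p * f k := by
    ext k
    simp only [f]
    push_cast
    rw [show 2 * (k : ℝ) + 1 + 1 = 2 * (k + 1) by ring, mul_pow]
    field_simp
  have hodd : HasSum (fun k => f (2 * k + 1)) (1 / 2 ^ p * ∑' k, f k) :=
    hodd_eq ▸ hf.hasSum.mul_left _
  have heven : HasSum (fun k => f (2 * k)) (∑' k, f (2 * k)) :=
    (hf.comp_injective (mul_right_injective₀ two_ne_zero)).hasSum
  have hsplit := (heven.even_add_odd hodd).unique hf.hasSum
  rw [show (1 - 1 / 2 ^ p) * ∑' k, f k = ∑' k, f (2 * k) by linarith]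
  convert heven using 2 with k
  simp [f]

lemma integral_pow_mul_exp_neg_mul_Ioi (n : ℕ) {c : ℝ} (hc : 0 < c) :
    ∫ x in Ioi (0 : ℝ), x ^ n * exp (-(c * x)) = n ! / c ^ (n + 1) := by
  have key := integral_rpow_mul_exp_neg_mul_Ioi (Nat.cast_add_one_pos n) hc
  rw [add_sub_cancel_right, Gamma_nat_eq_factorial, ← Nat.cast_add_one, rpow_natCast] at key
  simp_rw [rpow_natCast] at key
  rw [key, div_pow, one_pow, one_div_mul_eq_div]

lemma integrableOn_pow_mul_exp_neg_mul_Ioi (n : ℕ) {c : ℝ} (hc : 0 < c) :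
    IntegrableOn (fun x => x ^ n * exp (-(c * x))) (Ioi 0) :=
  .of_integral_ne_zero (by rw [integral_pow_mul_exp_neg_mul_Ioi n hc]; positivity)

lemma hasSum_two_mul_exp_neg_odd_mul {x : ℝ} (hx : 0 < x) :
    HasSum (fun k : ℕ => 2 * exp (-((2 * k + 1) * x))) (sinh x)⁻¹ := by
  have hq : exp (-(2 * x)) < 1 := exp_lt_one_iff.mpr (by linarith)
  have hterm : (fun k : ℕ => 2 * exp (-((2 * k + 1) * x))) =
      fun k => 2 * exp (-x) * exp (-(2 * x)) ^ k := by
    ext k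
    rw [← exp_nat_mul, mul_assoc, ← exp_add]
    ring_nf
  have hsum : (sinh x)⁻¹ = 2 * exp (-x) * (1 - exp (-(2 * x)))⁻¹ := by
    rw [sinh_eq, show -(2 * x) = -x + -x by ring, exp_add, exp_neg]
    field_simp
  rw [hterm, hsum]
  exact (hasSum_geometric_of_lt_one (exp_pos _).le hq).mul_left _

lemma integral_pow_mul_inv_sinh {n : ℕ} (hn : n ≠ 0) :
    ∫ x in Ioi (0 : ℝ), x ^ n * (sinh x)⁻¹ =
      2 * n ! * (1 - 1 / 2 ^ (n + 1)) * ∑' k : ℕ, 1 / ((k : ℝ) + 1) ^ (n + 1) := by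
  set F : ℕ → ℝ → ℝ := fun k x => 2 * (x ^ n * exp (-((2 * k + 1) * x)))
  have hF_int (k : ℕ) : IntegrableOn (F k) (Ioi 0) :=
    (integrableOn_pow_mul_exp_neg_mul_Ioi n (by positivity)).const_mul 2
  have hF_integral (k : ℕ) :
      ∫ x in Ioi (0 : ℝ), F k x = 2 * n ! * (1 / (2 * k + 1) ^ (n + 1)) := by
    rw [integral_const_mul, integral_pow_mul_exp_neg_mul_Ioi n (by positivity), mul_one_div,
      mul_div_assoc]
  have hF_norm (k : ℕ) : ∫ x in Ioi (0 : ℝ), ‖F k x‖ = ∫ x in Ioi (0 : ℝ), F k x :=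
    setIntegral_congr_fun measurableSet_Ioi fun x (hx : 0 < x) => norm_of_nonneg (by positivity)
  have hF_tsum : EqOn (fun x => ∑' k, F k x) (fun x => x ^ n * (sinh x)⁻¹) (Ioi 0) :=
    fun x hx => by
      simp only [F, mul_left_comm (2 : ℝ)]
      exact ((hasSum_two_mul_exp_neg_odd_mul hx).mul_left (x ^ n)).tsum_eq
  have hodd := (hasSum_one_div_two_mul_add_one_pow (p := n + 1) (by omega)).mul_left
    (2 * (n ! : ℝ))
  have hsum := hasSum_integral_of_summable_integral_norm hF_int
    (by simpa only [hF_norm, hF_integral] using hodd.summable)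
  rw [← setIntegral_congr_fun measurableSet_Ioi hF_tsum, ← hsum.tsum_eq, mul_assoc]
  simpa only [hF_integral] using hodd.tsum_eq

lemma integral_pow_mul_comp_mul_left_Ioi (g : ℝ → ℝ) (n : ℕ) {a : ℝ} (ha : 0 < a) :
    ∫ x in Ioi (0 : ℝ), x ^ n * g (a * x) = (∫ x in Ioi (0 : ℝ), x ^ n * g x) / a ^ (n + 1) := by
  have hscale (x : ℝ) : x ^ n * g (a * x) = (a ^ n)⁻¹ * ((a * x) ^ n * g (a * x)) := by
    rw [mul_pow]
    field_simp
  simp_rw [hscale]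
  rw [integral_const_mul, integral_comp_mul_left_Ioi (fun y => y ^ n * g y) 0 ha, mul_zero,
    smul_eq_mul, pow_succ]
  field_simp

theorem integral_sq_div_sinh (a : ℝ) (ha : 0 < a) :
    ∫ x in Set.Ioi (0 : ℝ), x ^ 2 / Real.sinh (a * x) =
      7 / (2 * a ^ 3) * ∑' k : ℕ, 1 / ((k : ℝ) + 1) ^ 3 := by
  simp_rw [div_eq_mul_inv (_ ^ 2)]
  rw [integral_pow_mul_comp_mul_left_Ioi (fun y => (sinh y)⁻¹) 2 ha,
    integral_pow_mul_inv_sinh two_ne_zero]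
  norm_num [Nat.factorial]
  ring
end

section
/- For the Gompertz wavelet ψ₂(t) = 2√2 * exp(-exp(-t)) * exp(-t) * (exp(-t) - 1), the admissibility constant C = 2π ∫_{-∞}^{∞} |ξ|^{-1} |ψ̂₂(ξ)|² dξ equals 56 ζ(3) / π², where ψ̂₂ is the Fourier transform of ψ₂ with convention ψ̂(ξ) = (1/√(2π)) ∫ ψ(t) e^{-iξt} dt. -/
/-!
The substitution `x = exp (-t)` turns the Fourier integral of `ψ₂` into a difference of two
Gamma integrals, so that `ψ̂₂ ξ = (2√2 / √(2π)) · iξ · Γ(1 + iξ)`. By the reflection formula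
`|Γ(1 + iξ)|² = πξ / sinh (πξ)`, hence `|ξ|⁻¹ |ψ̂₂ ξ|² = 4ξ² / sinh (π|ξ|)`. Expanding
`1 / sinh` as a geometric series in `exp (-πt)` identifies `∫₀^∞ t² / sinh (πt) dt` with a
Dirichlet series over the odd integers, `(4 / π³) ∑ (2k+1)⁻³ = 7ζ(3) / (2π³)`.
-/

open MeasureTheory Set

theorem integral_exp_neg_smul_comp_exp_neg {E : Type*} [NormedAddCommGroup E] [NormedSpace ℝ E]
    (g : ℝ → E) : ∫ t, Real.exp (-t) • g (Real.exp (-t)) = ∫ x in Ioi 0, g x := by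
  rw [integral_neg_eq_self (fun t ↦ Real.exp t • g (Real.exp t)), ← Real.range_exp, ← image_univ,
    integral_image_eq_integral_abs_deriv_smul MeasurableSet.univ
      (fun x _ ↦ (Real.hasDerivAt_exp x).hasDerivWithinAt) Real.exp_injective.injOn g]
  simp [abs_of_pos (Real.exp_pos _)]

theorem Complex.ofReal_exp_neg_cpow (t : ℝ) (s : ℂ) :
    (Real.exp (-t) : ℂ) ^ s = Complex.exp (-s * t) := by
  rw [Complex.ofReal_exp, Complex.cpow_def_of_ne_zero (Complex.exp_ne_zero _),
    Complex.log_exp (by simp [Real.pi_pos]) (by simp [Real.pi_nonneg])]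
  push_cast
  ring_nf

theorem integral_exp_neg_mul_sub_one_mul_cpow {s : ℂ} (hs : -1 < s.re) :
    ∫ x in Ioi (0 : ℝ), (Real.exp (-x) : ℂ) * ((x : ℂ) - 1) * (x : ℂ) ^ s =
      s * Complex.Gamma (1 + s) := by
  have hs₁ : 0 < (s + 1).re := by rw [Complex.add_re, Complex.one_re]; linarith
  have hs₂ : 0 < (s + 2).re := by rw [Complex.add_re, Complex.re_ofNat]; linarith
  have hGamma₁ := Complex.Gamma_eq_integral hs₁
  have hGamma₂ := Complex.Gamma_eq_integral hs₂
  rw [Complex.GammaIntegral] at hGamma₁ hGamma₂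
  have hdiff : Complex.Gamma (s + 2) - Complex.Gamma (s + 1) = s * Complex.Gamma (1 + s) := by
    rw [show s + 2 = (s + 1) + 1 by ring, Complex.Gamma_add_one _ (fun h ↦ by simp [h] at hs₁),
      add_comm 1 s]
    ring
  rw [← hdiff, hGamma₁, hGamma₂, ← integral_sub (Complex.GammaIntegral_convergent hs₂)
    (Complex.GammaIntegral_convergent hs₁)]
  refine setIntegral_congr_fun measurableSet_Ioi fun x hx ↦ ?_
  have hx0 : (x : ℂ) ≠ 0 := Complex.ofReal_ne_zero.mpr hx.out.ne'
  rw [show s + 2 - 1 = s + 1 by ring, add_sub_cancel_right, Complex.cpow_add _ _ hx0,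
    Complex.cpow_one]
  ring

theorem integral_gompertz_mul_exp_neg {s : ℂ} (hs : -1 < s.re) :
    ∫ t : ℝ, ((Real.exp (-Real.exp (-t)) * Real.exp (-t) * (Real.exp (-t) - 1) : ℝ) : ℂ) *
      Complex.exp (-s * t) = s * Complex.Gamma (1 + s) := by
  rw [← integral_exp_neg_mul_sub_one_mul_cpow hs, ← integral_exp_neg_smul_comp_exp_neg]
  congr 1 with t
  rw [Complex.ofReal_exp_neg_cpow, Complex.real_smul]
  push_cast
  ring

theorem Complex.sq_norm_Gamma_one_add_I_mul {y : ℝ} (hy : y ≠ 0) :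
    ‖Complex.Gamma (1 + Complex.I * y)‖ ^ 2 = Real.pi * y / Real.sinh (Real.pi * y) := by
  have hconj : starRingEnd ℂ (Complex.Gamma (1 + Complex.I * y)) =
      Complex.Gamma (1 - Complex.I * y) := by
    rw [← Complex.Gamma_conj]
    simp [sub_eq_add_neg]
  have hshift : Complex.Gamma (1 + Complex.I * y) =
      Complex.I * y * Complex.Gamma (Complex.I * y) := by
    rw [add_comm, Complex.Gamma_add_one _ (by simp [hy])]
  have hsin : Complex.sin (Real.pi * (Complex.I * y)) = Real.sinh (Real.pi * y) * Complex.I := by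
    rw [show (Real.pi : ℂ) * (Complex.I * y) = ((Real.pi * y : ℝ) : ℂ) * Complex.I by
      push_cast; ring, Complex.sin_mul_I, Complex.ofReal_sinh]
  have hsinh : (Real.sinh (Real.pi * y) : ℂ) ≠ 0 := by
    exact_mod_cast (by simp [Real.pi_ne_zero, hy] : Real.sinh (Real.pi * y) ≠ 0)
  apply Complex.ofReal_injective
  rw [Complex.ofReal_pow, ← Complex.mul_conj', hconj, hshift, mul_assoc,
    Complex.Gamma_mul_Gamma_one_sub, hsin]
  push_cast
  field_simp

theorem Complex.abs_inv_mul_sq_norm_I_mul_mul_Gamma (y : ℝ) :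
    |y|⁻¹ * ‖Complex.I * y * Complex.Gamma (1 + Complex.I * y)‖ ^ 2 =
      Real.pi * y ^ 2 / Real.sinh (Real.pi * |y|) := by
  rcases eq_or_ne y 0 with rfl | hy
  · simp
  rw [norm_mul, norm_mul, Complex.norm_I, one_mul, Complex.norm_real, Real.norm_eq_abs, mul_pow,
    sq_abs, Complex.sq_norm_Gamma_one_add_I_mul hy]
  rcases hy.lt_or_gt with hneg | hpos
  · rw [abs_of_neg hneg, mul_neg, Real.sinh_neg]
    field_simp
  · rw [abs_of_pos hpos]
    field_simp

theorem Real.hasSum_inv_sinh {x : ℝ} (hx : 0 < x) :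
    HasSum (fun k : ℕ ↦ 2 * Real.exp (-((2 * k + 1) * x))) (Real.sinh x)⁻¹ := by
  have hq : Real.exp (-(2 * x)) < 1 := Real.exp_lt_one_iff.mpr (by linarith)
  have hsinh : (Real.sinh x)⁻¹ = 2 * Real.exp (-x) * (1 - Real.exp (-(2 * x)))⁻¹ := by
    have : 0 < 1 - Real.exp (-(2 * x)) := by linarith
    rw [Real.sinh_eq, show -(2 * x) = -x + -x by ring, Real.exp_add, Real.exp_neg]
    field_simp
  rw [hsinh]
  refine ((hasSum_geometric_of_lt_one (Real.exp_pos _).le hq).mul_left _).congr_fun fun k ↦ ?_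
  rw [← Real.exp_nat_mul, mul_assoc, ← Real.exp_add]
  ring_nf

theorem summable_one_div_two_mul_add_one_rpow {p : ℝ} (hp : 1 < p) :
    Summable (fun k : ℕ ↦ 1 / (2 * (k : ℝ) + 1) ^ p) := by
  refine Summable.of_nonneg_of_le (fun k ↦ by positivity) (fun k ↦ ?_)
    ((summable_nat_add_iff 1).mpr (Real.summable_one_div_nat_rpow.mpr hp))
  push_cast
  gcongr
  linarith [k.cast_nonneg (α := ℝ)]

theorem hasSum_mellin_inv_sinh_pi_mul {s : ℂ} (hs : 1 < s.re) :
    HasSum (fun k : ℕ ↦ Real.pi ^ (-s) * Complex.Gamma s * 2 / ((2 * k + 1 : ℝ) : ℂ) ^ s)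
      (mellin (fun t ↦ ((Real.sinh (Real.pi * t))⁻¹ : ℝ)) s) := by
  refine hasSum_mellin_pi_mul (fun k ↦ Or.inr (by positivity)) (by linarith) (fun t ht ↦ ?_) ?_
  · convert Complex.hasSum_ofReal.mpr (Real.hasSum_inv_sinh (mul_pos Real.pi_pos ht))
      using 2 with k
    push_cast
    ring_nf
  · simpa [div_eq_mul_one_div (2 : ℝ)] using (summable_one_div_two_mul_add_one_rpow hs).mul_left 2

theorem tsum_one_div_two_mul_add_one_pow {p : ℕ} (hp : 1 < p) :
    ∑' k : ℕ, 1 / (2 * (k : ℝ) + 1) ^ p = (1 - 1 / 2 ^ p) * ∑' k : ℕ, 1 / ((k : ℝ) + 1) ^ p := by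
  set f : ℕ → ℝ := fun k ↦ 1 / ((k : ℝ) + 1) ^ p
  have hf : Summable f := by
    simpa [f] using (summable_nat_add_iff 1).mpr (Real.summable_one_div_nat_pow.mpr hp)
  have heven (k : ℕ) : f (2 * k) = 1 / (2 * (k : ℝ) + 1) ^ p := by simp [f]
  have hodd (k : ℕ) : f (2 * k + 1) = 1 / 2 ^ p * f k := by
    simp only [f]
    push_cast
    rw [show 2 * (k : ℝ) + 1 + 1 = 2 * (k + 1) by ring, mul_pow, one_div_mul_one_div]
  have hsplit := tsum_even_add_odd (hf.comp_injective (mul_right_injective₀ two_ne_zero))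
    (hf.comp_injective ((add_left_injective 1).comp (mul_right_injective₀ two_ne_zero)))
  simp only [heven, hodd, tsum_mul_left] at hsplit
  linarith

theorem integral_sq_div_sinh_pi_mul :
    ∫ t in Ioi 0, t ^ 2 / Real.sinh (Real.pi * t) =
      7 / (2 * Real.pi ^ 3) * ∑' k : ℕ, 1 / ((k : ℝ) + 1) ^ 3 := by
  have h := (hasSum_mellin_inv_sinh_pi_mul (s := 3) (by norm_num)).tsum_eq
  have hGamma : Complex.Gamma 3 = 2 := by simp
  have hterm (k : ℕ) :
      (Real.pi : ℂ) ^ (-3 : ℂ) * Complex.Gamma 3 * 2 / ((2 * k + 1 : ℝ) : ℂ) ^ (3 : ℂ) =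
      ((4 / Real.pi ^ 3 * (1 / (2 * (k : ℝ) + 1) ^ 3) : ℝ) : ℂ) := by
    rw [Complex.cpow_neg, Complex.cpow_ofNat, Complex.cpow_ofNat, hGamma]
    push_cast
    ring
  have hintegrand (t : ℝ) : (t : ℂ) ^ ((3 : ℂ) - 1) • (((Real.sinh (Real.pi * t))⁻¹ : ℝ) : ℂ) =
      ((t ^ 2 / Real.sinh (Real.pi * t) : ℝ) : ℂ) := by
    rw [show (3 : ℂ) - 1 = 2 by norm_num, Complex.cpow_ofNat, smul_eq_mul]
    push_cast
    ring
  simp only [mellin, hterm, hintegrand, integral_complex_ofReal, ← Complex.ofReal_tsum] at h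
  rw [← Complex.ofReal_injective h, tsum_mul_left, tsum_one_div_two_mul_add_one_pow (by norm_num)]
  field_simp
  ring

open Complex in
theorem gompertz_wavelet_admissibility
    (ψ : ℝ → ℝ)
    (hψ : ∀ t, ψ t = 2 * Real.sqrt 2 *
      (Real.exp (-Real.exp (-t)) * Real.exp (-t) * (Real.exp (-t) - 1)))
    (ψhat : ℝ → ℂ)
    (hψhat : ∀ ξ : ℝ, ψhat ξ =
      (1 / Real.sqrt (2 * Real.pi)) * ∫ t : ℝ, (ψ t : ℂ) * Complex.exp (-I * ξ * t)) :
    2 * Real.pi * ∫ ξ : ℝ, |ξ|⁻¹ * ‖ψhat ξ‖ ^ 2 =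
      56 * (∑' k : ℕ, 1 / ((k : ℝ) + 1) ^ 3) / Real.pi ^ 2 := by
  have hψhat_eq (ξ : ℝ) : ψhat ξ =
      ((2 * Real.sqrt 2 / Real.sqrt (2 * Real.pi) : ℝ) : ℂ) * (I * ξ * Gamma (1 + I * ξ)) := by
    rw [hψhat, ← integral_gompertz_mul_exp_neg (s := I * ξ) (by simp), ← integral_const_mul,
      ← integral_const_mul]
    congr 1 with t
    rw [hψ]
    push_cast
    ring_nf
  have hintegrand (ξ : ℝ) : |ξ|⁻¹ * ‖ψhat ξ‖ ^ 2 = 4 * (|ξ| ^ 2 / Real.sinh (Real.pi * |ξ|)) := by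
    rw [hψhat_eq, norm_mul, mul_pow, mul_left_comm, abs_inv_mul_sq_norm_I_mul_mul_Gamma, sq_abs,
      Complex.norm_real, Real.norm_eq_abs, sq_abs, div_pow, Real.sq_sqrt (by positivity),
      mul_pow, Real.sq_sqrt zero_le_two]
    field_simp
    ring
  simp_rw [hintegrand]
  rw [integral_comp_abs (f := fun y ↦ 4 * (y ^ 2 / Real.sinh (Real.pi * y))), integral_const_mul,
    integral_sq_div_sinh_pi_mul]
  field_simp
  ring
end

section
/- The Fourier transform of the n-th derivative of x(t) = exp(-exp(-t)) is given by (iξ)^{n-1} * Γ(1 + iξ) / √(2π), for every n ≥ 1 and real ξ, using the convention F(f)(ξ) = (1/√(2π)) ∫ f(t) e^{-iξt} dt. -/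
/-!
Every derivative of `x(t) = exp(-exp(-t))` has the form `p(e^{-t}) x(t)` for a real polynomial
`p`, differentiation acting on `p` by `p ↦ X (p - p')`. From the first derivative on, `X ∣ p`, and
the substitution `u = e^{-t}` turns `∫ p(e^{-t}) x(t) dt` into `∫₀^∞ (p(u)/u) e^{-u} du`, which
converges absolutely; so `x', x'', …` are all integrable and each differentiation multiplies the
Fourier transform by `iξ`. The same substitution turns the transform of `x'(t) = e^{-t} x(t)`
into Euler's integral `∫₀^∞ u^{iξ} e^{-u} du = Γ(1 + iξ)`.
-/

open MeasureTheory Polynomial Set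

section ExpNegSubstitution

variable {E : Type*} [NormedAddCommGroup E] [NormedSpace ℝ E]

lemma hasDerivAt_exp_neg (t : ℝ) :
    HasDerivAt (fun t : ℝ => Real.exp (-t)) (-Real.exp (-t)) t := by
  simpa using (hasDerivAt_neg t).exp

lemma image_exp_neg_univ : (fun t : ℝ => Real.exp (-t)) '' univ = Ioi 0 := by
  rw [image_univ, ← Real.range_exp]
  exact neg_surjective.range_comp Real.exp

lemma injective_exp_neg : Function.Injective fun t : ℝ => Real.exp (-t) :=
  Real.exp_injective.comp neg_injective

lemma integrable_comp_exp_neg_iff (g : ℝ → E) :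
    Integrable (fun t => Real.exp (-t) • g (Real.exp (-t))) ↔ IntegrableOn g (Ioi 0) := by
  rw [← image_exp_neg_univ, integrableOn_image_iff_integrableOn_abs_deriv_smul MeasurableSet.univ
    (fun t _ => (hasDerivAt_exp_neg t).hasDerivWithinAt) injective_exp_neg.injOn]
  simp [abs_of_pos (Real.exp_pos _)]

lemma integral_comp_exp_neg (g : ℝ → E) :
    ∫ t, Real.exp (-t) • g (Real.exp (-t)) = ∫ u in Ioi 0, g u := by
  rw [← image_exp_neg_univ, integral_image_eq_integral_abs_deriv_smul MeasurableSet.univ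
    (fun t _ => (hasDerivAt_exp_neg t).hasDerivWithinAt) injective_exp_neg.injOn]
  simp [abs_of_pos (Real.exp_pos _)]

end ExpNegSubstitution

lemma Polynomial.integrableOn_eval_mul_exp_neg_Ioi (q : ℝ[X]) :
    IntegrableOn (fun u => q.eval u * Real.exp (-u)) (Ioi 0) := by
  simp_rw [eval_eq_sum_range, Finset.sum_mul]
  refine integrable_finsetSum _ fun k _ => ?_
  have h := Real.GammaIntegral_convergent (s := k + 1) (by positivity)
  simp_rw [add_sub_cancel_right, Real.rpow_natCast] at h
  refine (h.const_mul (q.coeff k)).congr (ae_of_all _ fun u => ?_)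
  ring

noncomputable def gompertzTerm (p : ℝ[X]) (t : ℝ) : ℝ :=
  p.eval (Real.exp (-t)) * Real.exp (-Real.exp (-t))

noncomputable def gompertzDerivPoly (p : ℝ[X]) : ℝ[X] := X * (p - derivative p)

lemma hasDerivAt_gompertzTerm (p : ℝ[X]) (t : ℝ) :
    HasDerivAt (gompertzTerm p) (gompertzTerm (gompertzDerivPoly p) t) t := by
  have hu := hasDerivAt_exp_neg t
  refine (((p.hasDerivAt _).comp t hu).mul hu.neg.exp).congr_deriv ?_
  simp only [gompertzTerm, gompertzDerivPoly, eval_mul, eval_X, eval_sub, Function.comp_apply,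
    Pi.neg_apply, neg_neg]
  ring

lemma iteratedDeriv_gompertzTerm (p : ℝ[X]) (n : ℕ) :
    iteratedDeriv n (gompertzTerm p) = gompertzTerm (gompertzDerivPoly^[n] p) := by
  induction n with
  | zero => rfl
  | succ n ih =>
    ext t
    rw [iteratedDeriv_succ, ih, Function.iterate_succ_apply']
    exact (hasDerivAt_gompertzTerm _ t).deriv

lemma integrable_gompertzTerm_of_X_dvd {p : ℝ[X]} (hp : X ∣ p) : Integrable (gompertzTerm p) := by
  obtain ⟨q, rfl⟩ := hp
  have h := (integrable_comp_exp_neg_iff _).2 q.integrableOn_eval_mul_exp_neg_Ioi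
  refine h.congr (ae_of_all _ fun t => ?_)
  simp only [gompertzTerm, eval_mul, eval_X, smul_eq_mul]
  ring

lemma X_dvd_gompertzDerivPoly_iterate (k : ℕ) : X ∣ gompertzDerivPoly^[k] X := by
  cases k with
  | zero => exact dvd_rfl
  | succ k => exact ⟨_, Function.iterate_succ_apply' _ _ _⟩

section Fourier

open Complex
open scoped FourierTransform

lemma Real.fourier_eq_pow_smul_of_hasDerivAt {E : Type*} [NormedAddCommGroup E] [NormedSpace ℂ E]
    (f : ℕ → ℝ → E) (hf : ∀ k t, HasDerivAt (f k) (f (k + 1) t) t)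
    (hf_int : ∀ k, Integrable (f k)) (k : ℕ) (w : ℝ) :
    𝓕 (f k) w = (2 * Real.pi * I * w) ^ k • 𝓕 (f 0) w := by
  induction k with
  | zero => simp
  | succ k ih =>
    have hderiv : deriv (f k) = f (k + 1) := funext fun t => (hf k t).deriv
    rw [← hderiv, Real.fourier_deriv (hf_int k) (fun t => (hf k t).differentiableAt)
      (hderiv ▸ hf_int (k + 1))]
    dsimp only
    rw [ih, smul_smul, pow_succ']

lemma integral_mul_cexp_neg_I_mul_eq_fourier (f : ℝ → ℂ) (ξ : ℝ) :
    ∫ t, f t * cexp (-I * ξ * t) = 𝓕 f (ξ / (2 * Real.pi)) := by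
  rw [Real.fourier_real_eq_integral_exp_smul]
  refine integral_congr_ae (ae_of_all _ fun t => ?_)
  dsimp only
  rw [smul_eq_mul, mul_comm]
  congr 2
  push_cast
  field_simp

lemma integral_mul_cexp_of_hasDerivAt (f : ℕ → ℝ → ℂ)
    (hf : ∀ k t, HasDerivAt (f k) (f (k + 1) t) t) (hf_int : ∀ k, Integrable (f k))
    (k : ℕ) (ξ : ℝ) :
    ∫ t, f k t * cexp (-I * ξ * t) = (I * ξ) ^ k * ∫ t, f 0 t * cexp (-I * ξ * t) := by
  simp only [integral_mul_cexp_neg_I_mul_eq_fourier,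
    Real.fourier_eq_pow_smul_of_hasDerivAt f hf hf_int k, smul_eq_mul]
  congr 2
  push_cast
  field_simp

lemma integral_gompertzTerm_X_mul_cexp (ξ : ℝ) :
    ∫ t, (gompertzTerm X t : ℂ) * cexp (-I * ξ * t) = Gamma (1 + I * ξ) := by
  rw [Gamma_eq_integral (by simp), GammaIntegral, ← integral_comp_exp_neg]
  refine integral_congr_ae (ae_of_all _ fun t => ?_)
  have hcpow : ((Real.exp (-t) : ℝ) : ℂ) ^ (1 + I * ξ - 1) = cexp (-I * ξ * t) := by
    rw [add_sub_cancel_left, cpow_def_of_ne_zero (by exact_mod_cast (Real.exp_pos _).ne'),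
      ← ofReal_log (Real.exp_pos _).le, Real.log_exp]
    push_cast
    ring_nf
  simp only [gompertzTerm, eval_X, hcpow, real_smul]
  push_cast
  ring

end Fourier

open Complex in
theorem fourier_transform_gompertz_nth_deriv
    (x : ℝ → ℝ) (hxdef : ∀ t, x t = Real.exp (-Real.exp (-t)))
    (n : ℕ) (hn : 1 ≤ n) (ξ : ℝ) :
    (1 / Real.sqrt (2 * Real.pi)) *
      ∫ t : ℝ, (Complex.ofReal (iteratedDeriv n x t)) * Complex.exp (-I * ξ * t) =
      (I * ξ) ^ (n - 1) * Complex.Gamma (1 + I * ξ) / Real.sqrt (2 * Real.pi) := by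
  obtain ⟨m, rfl⟩ := Nat.exists_eq_add_of_le' hn
  have hx : x = gompertzTerm 1 := funext fun t => by simp [hxdef, gompertzTerm]
  have hxderiv : iteratedDeriv (m + 1) x = gompertzTerm (gompertzDerivPoly^[m] X) := by
    rw [hx, iteratedDeriv_gompertzTerm, Function.iterate_succ_apply]
    simp [gompertzDerivPoly]
  set f : ℕ → ℝ → ℂ := fun k t => gompertzTerm (gompertzDerivPoly^[k] X) t
  have hf : ∀ k t, HasDerivAt (f k) (f (k + 1) t) t := fun k t => by
    simpa only [f, Function.iterate_succ_apply'] using (hasDerivAt_gompertzTerm _ t).ofReal_comp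
  have hf_int : ∀ k, Integrable (f k) := fun k =>
    (integrable_gompertzTerm_of_X_dvd (X_dvd_gompertzDerivPoly_iterate k)).ofReal
  rw [hxderiv, Nat.add_sub_cancel, integral_mul_cexp_of_hasDerivAt f hf hf_int m ξ]
  simp only [f, Function.iterate_zero_apply, integral_gompertzTerm_X_mul_cexp]
  ring
end
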